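/- arXiv:2407.10971 — 2 statements merged into one kernel-verified Lean document; each statement's English description precedes it below -/
import Mathlib

section
/- If P̄ is a row-stochastic n×n real matrix and 0 < γ < 1, then det(I − γP̄) > 0. -/
open Matrix Finset

lemma det_ne_zero_aux (n : ℕ) (P : Matrix (Fin n) (Fin n) ℝ)
    (hnonneg : ∀ i j, 0 ≤ P i j) (hrow : ∀ i, ∑ j, P i j = 1)
    (c : ℝ) (hc0 : 0 ≤ c) (hc1 : c < 1) : (1 - c • P).det ≠ 0 := by
  intro hdet
  obtain ⟨v, hv, hmul⟩ := (Matrix.exists_mulVec_eq_zero_iff).mpr hdet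
  have hmul' : v - c • (P *ᵥ v) = 0 := by
    rw [Matrix.sub_mulVec, Matrix.smul_mulVec, Matrix.one_mulVec] at hmul
    exact hmul
  have hveq : ∀ i, v i = c * ∑ j, P i j * v j := by
    intro i
    have h2 := congrFun hmul' i
    have : v i = c * (P *ᵥ v) i := by
      simpa [sub_eq_zero] using h2
    simpa [Matrix.mulVec, dotProduct] using this
  obtain ⟨j0, hj0⟩ := Function.ne_iff.mp hv
  obtain ⟨i, -, hi⟩ := Finset.exists_max_image Finset.univ (fun i => |v i|)
    ⟨j0, Finset.mem_univ _⟩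
  have hipos : 0 < |v i| := lt_of_lt_of_le (abs_pos.mpr hj0) (hi j0 (Finset.mem_univ _))
  have hle : |v i| ≤ c * |v i| := by
    calc |v i| = |c * ∑ j, P i j * v j| := by rw [← hveq]
    _ = c * |∑ j, P i j * v j| := by rw [abs_mul, abs_of_nonneg hc0]
    _ ≤ c * ∑ j, P i j * |v j| := by
        refine mul_le_mul_of_nonneg_left ?_ hc0
        refine (Finset.abs_sum_le_sum_abs _ _).trans ?_
        refine Finset.sum_le_sum fun j _ => ?_
        rw [abs_mul, abs_of_nonneg (hnonneg i j)]
    _ ≤ c * ∑ j, P i j * |v i| := by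
        refine mul_le_mul_of_nonneg_left ?_ hc0
        exact Finset.sum_le_sum fun j _ =>
          mul_le_mul_of_nonneg_left (hi j (Finset.mem_univ _)) (hnonneg i j)
    _ = c * |v i| := by rw [← Finset.sum_mul, hrow, one_mul]
  nlinarith

theorem rowStochastic_det_one_sub_smul_pos
    (n : ℕ) (P : Matrix (Fin n) (Fin n) ℝ)
    (hnonneg : ∀ i j, 0 ≤ P i j) (hrow : ∀ i, ∑ j, P i j = 1)
    (γ : ℝ) (hγ0 : 0 < γ) (hγ1 : γ < 1) :
    0 < (1 - γ • P).det := by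
  set f : ℝ → ℝ := fun t => (1 - (t * γ) • P).det with hf
  have hcont : Continuous f := by
    apply Continuous.matrix_det
    fun_prop
  have hf0 : f 0 = 1 := by simp [hf]
  have hne : ∀ t ∈ Set.Icc (0:ℝ) 1, f t ≠ 0 := fun t ht =>
    det_ne_zero_aux n P hnonneg hrow (t * γ)
      (mul_nonneg ht.1 hγ0.le)
      (lt_of_le_of_lt (by nlinarith [ht.2, hγ0.le] : t * γ ≤ γ) hγ1)
  have hf1 : f 1 ≠ 0 := hne 1 (by norm_num)
  by_contra h
  push_neg at h
  have hf1lt : f 1 < 0 := lt_of_le_of_ne (by simpa [hf] using h) hf1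
  obtain ⟨t, ht, ht0⟩ := intermediate_value_Icc' (by norm_num : (0:ℝ) ≤ 1)
    (hcont.continuousOn) (Set.mem_Icc.mpr ⟨hf1lt.le, by rw [hf0]; norm_num⟩)
  exact hne t ht ht0
end

section
/- If P̄₁ and P̄₂ are row-stochastic n×n matrices and 0 < γ < 1, then for any R ∈ ℝ^n, ‖(I − γP̄₁)^{-1}R − (I − γP̄₂)^{-1}R‖∞ ≤ (γ/(1−γ)²)·‖P̄₁ − P̄₂‖∞·‖R‖∞, where ‖·‖∞ on matrices denotes the operator norm induced by the sup norm (maximum absolute row sum). -/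
open Matrix

/-- Operator norm of a matrix induced by the sup norm on vectors:
the maximum absolute row sum. -/
noncomputable def matrixSupOpNorm {n : ℕ} (hn : 0 < n)
    (M : Matrix (Fin n) (Fin n) ℝ) : ℝ :=
  Finset.univ.sup' (Finset.univ_nonempty_iff.mpr
    (Fin.pos_iff_nonempty.mp hn)) (fun i => ∑ j, |M i j|)

lemma matrixSupOpNorm_nonneg {n : ℕ} (hn : 0 < n)
    (M : Matrix (Fin n) (Fin n) ℝ) : 0 ≤ matrixSupOpNorm hn M := by
  obtain ⟨i⟩ := Fin.pos_iff_nonempty.mp hn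
  refine le_trans ?_ (Finset.le_sup' (fun i => ∑ j, |M i j|) (Finset.mem_univ i))
  positivity

lemma mulVec_sup_bound {n : ℕ} (hn : 0 < n) (M : Matrix (Fin n) (Fin n) ℝ)
    (v : Fin n → ℝ) : ‖M *ᵥ v‖ ≤ matrixSupOpNorm hn M * ‖v‖ := by
  rw [pi_norm_le_iff_of_nonneg (mul_nonneg (matrixSupOpNorm_nonneg hn M) (norm_nonneg v))]
  intro i
  calc ‖(M *ᵥ v) i‖ = |∑ j, M i j * v j| := rfl
    _ ≤ ∑ j, |M i j * v j| := Finset.abs_sum_le_sum_abs _ _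
    _ ≤ ∑ j, |M i j| * ‖v‖ := by
        refine Finset.sum_le_sum fun j _ => ?_
        rw [abs_mul]
        exact mul_le_mul_of_nonneg_left (norm_le_pi_norm v j) (abs_nonneg _)
    _ = (∑ j, |M i j|) * ‖v‖ := (Finset.sum_mul _ _ _).symm
    _ ≤ matrixSupOpNorm hn M * ‖v‖ := by
        exact mul_le_mul_of_nonneg_right
          (Finset.le_sup' (fun i => ∑ j, |M i j|) (Finset.mem_univ i)) (norm_nonneg v)

lemma stochastic_mulVec_bound {n : ℕ} (P : Matrix (Fin n) (Fin n) ℝ)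
    (hnonneg : ∀ i j, 0 ≤ P i j) (hrow : ∀ i, ∑ j, P i j = 1)
    (v : Fin n → ℝ) : ‖P *ᵥ v‖ ≤ ‖v‖ := by
  rw [pi_norm_le_iff_of_nonneg (norm_nonneg v)]
  intro i
  calc ‖(P *ᵥ v) i‖ = |∑ j, P i j * v j| := rfl
    _ ≤ ∑ j, |P i j * v j| := Finset.abs_sum_le_sum_abs _ _
    _ ≤ ∑ j, P i j * ‖v‖ := by
        refine Finset.sum_le_sum fun j _ => ?_
        rw [abs_mul, abs_of_nonneg (hnonneg i j)]
        exact mul_le_mul_of_nonneg_left (norm_le_pi_norm v j) (hnonneg i j)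
    _ = ‖v‖ := by rw [← Finset.sum_mul, hrow i, one_mul]

/-- Lower bound on the resolvent: ‖(1 - γ•P) v‖ ≥ (1-γ)‖v‖. -/
lemma resolvent_lower_bound {n : ℕ} (P : Matrix (Fin n) (Fin n) ℝ)
    (hnonneg : ∀ i j, 0 ≤ P i j) (hrow : ∀ i, ∑ j, P i j = 1)
    (γ : ℝ) (hγ0 : 0 < γ) (hγ1 : γ < 1) (v : Fin n → ℝ) :
    (1 - γ) * ‖v‖ ≤ ‖(1 - γ • P) *ᵥ v‖ := by
  have h1 : (1 - γ • P) *ᵥ v = v - γ • (P *ᵥ v) := by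
    rw [sub_mulVec, one_mulVec, smul_mulVec]
  have h2 : ‖v‖ - ‖γ • (P *ᵥ v)‖ ≤ ‖v - γ • (P *ᵥ v)‖ := norm_sub_norm_le _ _
  have h3 : ‖γ • (P *ᵥ v)‖ ≤ γ * ‖v‖ := by
    rw [norm_smul, Real.norm_eq_abs, abs_of_pos hγ0]
    exact mul_le_mul_of_nonneg_left (stochastic_mulVec_bound P hnonneg hrow v) hγ0.le
  rw [h1]
  nlinarith [norm_nonneg v]

lemma resolvent_isUnit {n : ℕ} (P : Matrix (Fin n) (Fin n) ℝ)
    (hnonneg : ∀ i j, 0 ≤ P i j) (hrow : ∀ i, ∑ j, P i j = 1)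
    (γ : ℝ) (hγ0 : 0 < γ) (hγ1 : γ < 1) : IsUnit (1 - γ • P) := by
  rw [← Matrix.mulVec_injective_iff_isUnit]
  intro u v huv
  have h := resolvent_lower_bound P hnonneg hrow γ hγ0 hγ1 (u - v)
  rw [mulVec_sub, huv, sub_self, norm_zero] at h
  have : ‖u - v‖ ≤ 0 := by nlinarith [norm_nonneg (u - v)]
  have := le_antisymm this (norm_nonneg _)
  rwa [norm_eq_zero, sub_eq_zero] at this

lemma resolvent_inv_bound {n : ℕ} (P : Matrix (Fin n) (Fin n) ℝ)
    (hnonneg : ∀ i j, 0 ≤ P i j) (hrow : ∀ i, ∑ j, P i j = 1)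
    (γ : ℝ) (hγ0 : 0 < γ) (hγ1 : γ < 1) (v : Fin n → ℝ) :
    ‖(1 - γ • P)⁻¹ *ᵥ v‖ ≤ ‖v‖ / (1 - γ) := by
  have hu := resolvent_isUnit P hnonneg hrow γ hγ0 hγ1
  have hdet : IsUnit (1 - γ • P).det := (Matrix.isUnit_iff_isUnit_det _).mp hu
  have key : (1 - γ • P) *ᵥ ((1 - γ • P)⁻¹ *ᵥ v) = v := by
    rw [mulVec_mulVec, Matrix.mul_nonsing_inv _ hdet, one_mulVec]
  have h := resolvent_lower_bound P hnonneg hrow γ hγ0 hγ1 ((1 - γ • P)⁻¹ *ᵥ v)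
  rw [key] at h
  rw [le_div_iff₀ (by linarith)]
  linarith

theorem perturbation_bound_Q_values
    (n : ℕ) (hn : 0 < n) (P₁ P₂ : Matrix (Fin n) (Fin n) ℝ)
    (h₁nonneg : ∀ i j, 0 ≤ P₁ i j) (h₁row : ∀ i, ∑ j, P₁ i j = 1)
    (h₂nonneg : ∀ i j, 0 ≤ P₂ i j) (h₂row : ∀ i, ∑ j, P₂ i j = 1)
    (γ : ℝ) (hγ0 : 0 < γ) (hγ1 : γ < 1) (R : Fin n → ℝ) :
    ‖(1 - γ • P₁)⁻¹ *ᵥ R - (1 - γ • P₂)⁻¹ *ᵥ R‖ ≤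
      γ / (1 - γ) ^ 2 * matrixSupOpNorm hn (P₁ - P₂) * ‖R‖ := by
  set A₁ := 1 - γ • P₁ with hA₁
  set A₂ := 1 - γ • P₂ with hA₂
  have hu₁ := resolvent_isUnit P₁ h₁nonneg h₁row γ hγ0 hγ1
  have hu₂ := resolvent_isUnit P₂ h₂nonneg h₂row γ hγ0 hγ1
  have hdet₁ : IsUnit A₁.det := (Matrix.isUnit_iff_isUnit_det _).mp hu₁
  have hdet₂ : IsUnit A₂.det := (Matrix.isUnit_iff_isUnit_det _).mp hu₂
  -- key matrix identity: A₁⁻¹ - A₂⁻¹ = A₁⁻¹ * (A₂ - A₁) * A₂⁻¹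
  have hid : A₁⁻¹ - A₂⁻¹ = A₁⁻¹ * (A₂ - A₁) * A₂⁻¹ := by
    rw [Matrix.mul_sub, Matrix.sub_mul, Matrix.mul_assoc,
      Matrix.mul_nonsing_inv _ hdet₂, Matrix.nonsing_inv_mul _ hdet₁,
      Matrix.mul_one, Matrix.one_mul]
  have hAA : A₂ - A₁ = γ • (P₁ - P₂) := by
    rw [hA₁, hA₂, smul_sub]; abel
  have hvec : A₁⁻¹ *ᵥ R - A₂⁻¹ *ᵥ R
      = A₁⁻¹ *ᵥ ((γ • (P₁ - P₂)) *ᵥ (A₂⁻¹ *ᵥ R)) := by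
    rw [mulVec_mulVec, mulVec_mulVec, ← hAA, ← hid, sub_mulVec]
  rw [hvec]
  have hM := matrixSupOpNorm_nonneg hn (P₁ - P₂)
  calc ‖A₁⁻¹ *ᵥ ((γ • (P₁ - P₂)) *ᵥ (A₂⁻¹ *ᵥ R))‖
      ≤ ‖(γ • (P₁ - P₂)) *ᵥ (A₂⁻¹ *ᵥ R)‖ / (1 - γ) :=
        resolvent_inv_bound P₁ h₁nonneg h₁row γ hγ0 hγ1 _
    _ = γ * ‖(P₁ - P₂) *ᵥ (A₂⁻¹ *ᵥ R)‖ / (1 - γ) := by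
        rw [smul_mulVec, norm_smul, Real.norm_eq_abs, abs_of_pos hγ0]
    _ ≤ γ * (matrixSupOpNorm hn (P₁ - P₂) * ‖A₂⁻¹ *ᵥ R‖) / (1 - γ) := by
        apply div_le_div_of_nonneg_right ?_ (by linarith)
        exact mul_le_mul_of_nonneg_left (mulVec_sup_bound hn _ _) hγ0.le
    _ ≤ γ * (matrixSupOpNorm hn (P₁ - P₂) * (‖R‖ / (1 - γ))) / (1 - γ) := by
        apply div_le_div_of_nonneg_right ?_ (by linarith)
        exact mul_le_mul_of_nonneg_left (mul_le_mul_of_nonneg_left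
          (resolvent_inv_bound P₂ h₂nonneg h₂row γ hγ0 hγ1 R) hM) hγ0.le
    _ = γ / (1 - γ) ^ 2 * matrixSupOpNorm hn (P₁ - P₂) * ‖R‖ := by
        field_simp
end
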